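/- Let H be the 5-dimensional complex Heisenberg Lie algebra with basis r₋₂, r₋₁, r₀, r₁, r₂ and brackets [r₋₁, r₁] = r₀, [r₂, r₋₂] = r₀, and [r_i, r_j] = 0 whenever i + j ≠ 0, and let w = H ⊕ sl₂(ℂ[X]) be the direct sum of Lie algebras, where sl₂(ℂ[X]) is the Lie algebra of 2×2 trace-zero matrices over ℂ[X] with y = E₁₂, z = E₂₁, h = E₁₁ − E₂₂. Set X₁ = r₁ − (1/2)y + (1/2)X·z, X₂ = r₋₁ + z, X₃ = r₋₂, and A(u) = X₁ + (u/3)·X₂ + (u²/6)·X₃ for u ∈ ℂ. Let we^1 = span_ℂ{X₂, X₃}, and let we^2 be the Lie subalgebra of w generated by we^1 together with all brackets [x, A(u)] with x ∈ we^1 and u ∈ ℂ. Then we^2 = span_ℂ{r₋₂, r₋₁, z, 2r₀ + h}. -/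

import Mathlib

open Polynomial Matrix

attribute [local instance 100] LieRing.ofAssociativeRing

/-- Ambient associative algebra containing the Wahlquist–Estabrook algebra
`w = H ⊕ sl₂(ℂ[X])` of KdV: the 5-dimensional Heisenberg algebra `H` is
realized inside `4×4` strictly upper-triangular complex matrices
(`r₋₁ = E₁₂, r₁ = E₂₄, r₂ = E₁₃, r₋₂ = E₃₄, r₀ = E₁₄`, so that
`[r₋₁,r₁] = [r₂,r₋₂] = r₀` and all other brackets of basis elements vanish),
and `sl₂(ℂ[X])` inside `2×2` matrices over `ℂ[X]`; the two factors of the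
product commute, and the bracket is the componentwise commutator. -/
abbrev WEAmb := Matrix (Fin 4) (Fin 4) ℂ × Matrix (Fin 2) (Fin 2) ℂ[X]

noncomputable def rHeis : ℤ → WEAmb
  | -1 => (Matrix.single 0 1 1, 0)
  | 1 => (Matrix.single 1 3 1, 0)
  | 2 => (Matrix.single 0 2 1, 0)
  | -2 => (Matrix.single 2 3 1, 0)
  | 0 => (Matrix.single 0 3 1, 0)
  | _ => 0

noncomputable def yE : WEAmb := (0, Matrix.single 0 1 1)
noncomputable def zE : WEAmb := (0, Matrix.single 1 0 1)
noncomputable def hE : WEAmb :=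
  (0, Matrix.single 0 0 1 - Matrix.single 1 1 1)
/-- `X·z`, the element `λ z` of `sl₂(ℂ[X])`. -/
noncomputable def zXE : WEAmb := (0, (X : ℂ[X]) • Matrix.single 1 0 1)

/-- `X₁ = r₁ − (1/2)y + (1/2)X·z`. -/
noncomputable def X₁E : WEAmb := rHeis 1 - (2⁻¹ : ℂ) • yE + (2⁻¹ : ℂ) • zXE
/-- `X₂ = r₋₁ + z`. -/
noncomputable def X₂E : WEAmb := rHeis (-1) + zE
/-- `X₃ = r₋₂`. -/
noncomputable def X₃E : WEAmb := rHeis (-2)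

/-- `A(u) = X₁ + (u/3)X₂ + (u²/6)X₃`, the `x`-part of the universal
zero-curvature representation of KdV. -/
noncomputable def AKdV (u : ℂ) : WEAmb := X₁E + (u / 3) • X₂E + (u ^ 2 / 6) • X₃E

/-!
The span `S` of `r₋₂, r₋₁, z, 2r₀ + h` is a Lie subalgebra: `r₋₂` and `r₋₁` commute with all four
elements and `[z, 2r₀ + h] = 2z`. The generators of `we²` lie in `S`, because `X₂ = r₋₁ + z`,
`X₃ = r₋₂`, and, whatever `u`, `[X₂, A(u)] = r₀ + h/2` and `[X₃, A(u)] = 0`. Conversely `we²`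
contains `X₃ = r₋₂`, `2[X₂, A(0)] = 2r₀ + h`, then `[X₂, 2r₀ + h]/2 = z`, and `X₂ − z = r₋₁`.
-/

open Submodule LieSubalgebra

theorem LieSubalgebra.coe_lieSpan_eq_span_of_forall_lie_mem_span {R L : Type*} [CommRing R]
    [LieRing L] [LieAlgebra R L] {s : Set L} (hs : ∀ᵉ (x ∈ s) (y ∈ s), ⁅x, y⁆ ∈ span R s) :
    lieSpan R L s = span R s := by
  have hclosed {x y : L} (hx : x ∈ span R s) (hy : y ∈ span R s) : ⁅x, y⁆ ∈ span R s := by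
    have hxy := apply_mem_map₂ (LieModule.toEnd R L L : L →ₗ[R] Module.End R L) hx hy
    rw [map₂_span_span] at hxy
    refine span_le.mpr ?_ (by simpa using hxy)
    rintro _ ⟨a, ha, b, hb, rfl⟩
    simpa using hs a ha b hb
  refine le_antisymm ?_ submodule_span_le_lieSpan
  change _ ≤ ({ span R s with lie_mem' := hclosed } : LieSubalgebra R L)
  rw [lieSpan_le]
  exact subset_span

noncomputable def weOne : Submodule ℂ WEAmb := span ℂ {X₂E, X₃E}

noncomputable def weTwoGenerators : Set WEAmb :=
  ↑weOne ∪ {a | ∃ x ∈ weOne, ∃ u : ℂ, a = ⁅x, AKdV u⁆}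

noncomputable def weTwoBasis : Set WEAmb := {rHeis (-2), rHeis (-1), zE, (2 : ℂ) • rHeis 0 + hE}

theorem lie_X₂E_AKdV (u : ℂ) : ⁅X₂E, AKdV u⁆ = (2⁻¹ : ℂ) • ((2 : ℂ) • rHeis 0 + hE) := by
  refine Prod.ext ?_ ?_ <;> ext i j <;> fin_cases i <;> fin_cases j <;>
    simp [AKdV, X₁E, X₂E, X₃E, rHeis, yE, zE, zXE, hE, Ring.lie_def, mul_apply, single_apply]

theorem lie_X₃E_AKdV (u : ℂ) : ⁅X₃E, AKdV u⁆ = 0 := by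
  refine Prod.ext ?_ ?_ <;> ext i j <;> fin_cases i <;> fin_cases j <;>
    simp [AKdV, X₁E, X₂E, X₃E, rHeis, yE, zE, zXE, Ring.lie_def, mul_apply, single_apply]

theorem lie_zE_two_smul_rHeis_zero_add_hE : ⁅zE, (2 : ℂ) • rHeis 0 + hE⁆ = (2 : ℂ) • zE := by
  refine Prod.ext ?_ ?_ <;> ext i j <;> fin_cases i <;> fin_cases j <;>
    simp [rHeis, zE, hE, Ring.lie_def, mul_apply, single_apply, two_mul]

theorem lie_eq_zero_of_mem_weTwoBasis {c b : WEAmb}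
    (hc : c ∈ ({rHeis (-2), rHeis (-1)} : Set WEAmb)) (hb : b ∈ weTwoBasis) : ⁅c, b⁆ = 0 := by
  rcases hc with rfl | rfl <;> rcases hb with rfl | rfl | rfl | rfl <;>
    refine Prod.ext ?_ ?_ <;> ext i j <;> fin_cases i <;> fin_cases j <;>
    simp [rHeis, zE, hE, Ring.lie_def]

theorem lie_mem_span_weTwoBasis :
    ∀ᵉ (a ∈ weTwoBasis) (b ∈ weTwoBasis), ⁅a, b⁆ ∈ span ℂ weTwoBasis := by
  have hz : zE ∈ span ℂ weTwoBasis := subset_span (by simp [weTwoBasis])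
  have hzg : ⁅zE, (2 : ℂ) • rHeis 0 + hE⁆ ∈ span ℂ weTwoBasis := by
    rw [lie_zE_two_smul_rHeis_zero_add_hE]
    exact smul_mem _ _ hz
  intro a ha b hb
  by_cases hac : a ∈ ({rHeis (-2), rHeis (-1)} : Set WEAmb)
  · rw [lie_eq_zero_of_mem_weTwoBasis hac hb]
    exact zero_mem _
  by_cases hbc : b ∈ ({rHeis (-2), rHeis (-1)} : Set WEAmb)
  · rw [← lie_skew, lie_eq_zero_of_mem_weTwoBasis hbc ha, neg_zero]
    exact zero_mem _
  simp only [weTwoBasis, Set.mem_insert_iff, Set.mem_singleton_iff] at ha hb hac hbc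
  have ha' : a = zE ∨ a = (2 : ℂ) • rHeis 0 + hE := by tauto
  have hb' : b = zE ∨ b = (2 : ℂ) • rHeis 0 + hE := by tauto
  rcases ha' with rfl | rfl <;> rcases hb' with rfl | rfl
  · rw [lie_self]
    exact zero_mem _
  · exact hzg
  · rw [← lie_skew]
    exact neg_mem hzg
  · rw [lie_self]
    exact zero_mem _

theorem weTwoGenerators_subset_span : weTwoGenerators ⊆ span ℂ weTwoBasis := by
  have hweOne : weOne ≤ span ℂ weTwoBasis := by
    rw [weOne, span_le, Set.pair_subset_iff]
    exact ⟨add_mem (subset_span (by simp [weTwoBasis])) (subset_span (by simp [weTwoBasis])),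
      subset_span (by simp [weTwoBasis, X₃E])⟩
  rintro _ (hx | ⟨x, hx, u, rfl⟩)
  · exact hweOne hx
  obtain ⟨a, b, rfl⟩ := mem_span_pair.mp hx
  rw [add_lie, smul_lie, smul_lie, lie_X₂E_AKdV, lie_X₃E_AKdV, smul_zero, add_zero]
  exact smul_mem _ _ (smul_mem _ _ (subset_span (by simp [weTwoBasis])))

theorem weTwoBasis_subset_lieSpan : weTwoBasis ⊆ lieSpan ℂ WEAmb weTwoGenerators := by
  set K := lieSpan ℂ WEAmb weTwoGenerators
  have hX₂ : X₂E ∈ weOne := subset_span (by simp)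
  have hX₃ : X₃E ∈ weOne := subset_span (by simp)
  have hX₂K : X₂E ∈ K := subset_lieSpan (Or.inl hX₂)
  have hgK : (2 : ℂ) • rHeis 0 + hE ∈ K := by
    have h := K.smul_mem (2 : ℂ) (subset_lieSpan (Or.inr ⟨X₂E, hX₂, 0, rfl⟩) : ⁅X₂E, AKdV 0⁆ ∈ K)
    rwa [lie_X₂E_AKdV, smul_smul, mul_inv_cancel₀ two_ne_zero, one_smul] at h
  have hzK : zE ∈ K := by
    have h := K.smul_mem (2⁻¹ : ℂ) (K.lie_mem hX₂K hgK)
    rwa [X₂E, add_lie, lie_eq_zero_of_mem_weTwoBasis (by simp) (by simp [weTwoBasis]), zero_add,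
      lie_zE_two_smul_rHeis_zero_add_hE, smul_smul, inv_mul_cancel₀ two_ne_zero, one_smul] at h
  simp only [weTwoBasis, Set.insert_subset_iff, Set.singleton_subset_iff, SetLike.mem_coe]
  refine ⟨subset_lieSpan (Or.inl hX₃), ?_, hzK, hgK⟩
  simpa [X₂E] using K.sub_mem hX₂K hzK

/-- With `we¹ = span_ℂ{X₂, X₃}`, the Lie subalgebra `we²` generated by `we¹`
together with all brackets `⁅x, A(u)⁆` (`x ∈ we¹`, `u ∈ ℂ`) equals
`span_ℂ{r₋₂, r₋₁, z, 2r₀ + h}`. -/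
theorem stmt13 (we₁ : Set WEAmb)
    (hwe₁ : we₁ = ↑(Submodule.span ℂ {X₂E, X₃E}))
    (we₂ : LieSubalgebra ℂ WEAmb)
    (hwe₂ : we₂ = LieSubalgebra.lieSpan ℂ WEAmb
      (we₁ ∪ {a | ∃ x ∈ we₁, ∃ u : ℂ, a = ⁅x, AKdV u⁆})) :
    we₂.toSubmodule
      = Submodule.span ℂ {rHeis (-2), rHeis (-1), zE, (2 : ℂ) • rHeis 0 + hE} := by
  subst hwe₁ hwe₂
  change (lieSpan ℂ WEAmb weTwoGenerators).toSubmodule = span ℂ weTwoBasis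
  rw [← coe_lieSpan_eq_span_of_forall_lie_mem_span lie_mem_span_weTwoBasis]
  congr 1
  refine le_antisymm (lieSpan_le.mpr ?_) (lieSpan_le.mpr weTwoBasis_subset_lieSpan)
  exact weTwoGenerators_subset_span.trans submodule_span_le_lieSpan
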